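/- If P is a Poisson random variable with mean λ > 0 and 0 < ε < 1, then the probability that P > (1+ε)λ is strictly less than exp(-λε²/4). -/

import Mathlib

open MeasureTheory ProbabilityTheory Real
open scoped NNReal Nat

/-!
Chernoff's method: the moment generating function of `Po(λ)` is `exp (λ (eᵗ - 1))`, and the
choice `t = log (1 + ε)` bounds the tail `P ≥ (1 + ε) λ` by `exp (-λ ((1 + ε) log (1 + ε) - ε))`.
From `log (1 + ε) ≥ 2ε / (ε + 2)` one gets `(1 + ε) log (1 + ε) - ε ≥ ε² / (ε + 2) > ε² / 4`.
-/

lemma sq_div_four_lt_one_add_mul_log_one_add_sub {x : ℝ} (hx0 : 0 < x) (hx2 : x < 2) :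
    x ^ 2 / 4 < (1 + x) * log (1 + x) - x := by
  have hlog := le_log_one_add_of_nonneg hx0.le
  calc x ^ 2 / 4 < x ^ 2 / (x + 2) := by gcongr; linarith
    _ = (1 + x) * (2 * x / (x + 2)) - x := by field_simp; ring
    _ ≤ (1 + x) * log (1 + x) - x := by gcongr

namespace ProbabilityTheory

lemma hasSum_poissonMeasure_mul_exp (r : ℝ≥0) (t : ℝ) :
    HasSum (fun n : ℕ ↦ exp (-r) * r ^ n / n ! * exp (t * n)) (exp (r * (exp t - 1))) := by
  have h := (NormedSpace.expSeries_div_hasSum_exp (r * exp t : ℝ)).mul_left (exp (-r))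
  rw [← exp_eq_exp_ℝ, ← exp_add] at h
  convert! h using 1
  · ext n
    rw [mul_comm t, exp_nat_mul, mul_pow]
    ring
  · ring_nf

lemma mgf_natCast_poissonMeasure (r : ℝ≥0) (t : ℝ) :
    mgf (fun n : ℕ ↦ (n : ℝ)) (poissonMeasure r) t = exp (r * (exp t - 1)) := by
  rw [mgf, integral_poissonMeasure]
  exact (hasSum_poissonMeasure_mul_exp r t).tsum_eq

lemma integrable_exp_mul_natCast_poissonMeasure (r : ℝ≥0) (t : ℝ) :
    Integrable (fun n : ℕ ↦ exp (t * n)) (poissonMeasure r) := by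
  rw [integrable_poissonMeasure_iff]
  simpa only [norm_of_nonneg (exp_pos _).le] using (hasSum_poissonMeasure_mul_exp r t).summable

lemma poissonMeasure_real_ge_le_exp (r : ℝ≥0) {t : ℝ} (ht : 0 ≤ t) (a : ℝ) :
    (poissonMeasure r).real {n : ℕ | a ≤ n} ≤ exp (-t * a + r * (exp t - 1)) := by
  rw [exp_add, ← mgf_natCast_poissonMeasure]
  exact measure_ge_le_exp_mul_mgf a ht (integrable_exp_mul_natCast_poissonMeasure r t)

lemma poissonMeasure_real_ge_one_add_mul_le (r : ℝ≥0) {ε : ℝ} (hε : 0 ≤ ε) :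
    (poissonMeasure r).real {n : ℕ | (1 + ε) * r ≤ n}
      ≤ exp (-r * ((1 + ε) * log (1 + ε) - ε)) := by
  convert poissonMeasure_real_ge_le_exp r (log_nonneg (by linarith : 1 ≤ 1 + ε)) _ using 2
  rw [exp_log (by linarith)]
  ring

end ProbabilityTheory

/-- Chernoff bound for the upper tail of a Poisson random variable:
if `P` has law `poissonMeasure lam` with `lam > 0` and `0 < eps < 1`, then
`ℙ[P > (1+eps)·lam] < exp(-lam·eps²/4)`. -/
theorem poisson_chernoff_upper
    {Ω : Type*} [MeasurableSpace Ω] (μ : MeasureTheory.Measure Ω)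
    [MeasureTheory.IsProbabilityMeasure μ]
    (P : Ω → ℕ) (lam : ℝ≥0) (hlam : 0 < lam)
    (hP : MeasureTheory.Measure.map P μ = poissonMeasure lam)
    (ε : ℝ) (hε0 : 0 < ε) (hε1 : ε < 1) :
    μ {ω | (1 + ε) * lam < (P ω : ℝ)}
      < ENNReal.ofReal (Real.exp (-(lam : ℝ) * ε ^ 2 / 4)) := by
  have hPm : AEMeasurable P μ := .of_map_ne_zero (hP ▸ IsProbabilityMeasure.ne_zero _)
  have hexp : exp (-lam * ((1 + ε) * log (1 + ε) - ε)) < exp (-lam * ε ^ 2 / 4) := by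
    have := sq_div_four_lt_one_add_mul_log_one_add_sub hε0 (by linarith)
    rw [exp_lt_exp, mul_div_assoc, neg_mul, neg_mul, neg_lt_neg_iff]
    exact mul_lt_mul_of_pos_left this (by exact_mod_cast hlam)
  calc μ {ω | (1 + ε) * lam < (P ω : ℝ)}
      = poissonMeasure lam {n : ℕ | (1 + ε) * lam < n} := by
        rw [← hP, Measure.map_apply_of_aemeasurable hPm .of_discrete]; rfl
    _ ≤ poissonMeasure lam {n : ℕ | (1 + ε) * lam ≤ n} :=
        measure_mono <| Set.ofPred_subset_ofPred.mpr fun _ ↦ le_of_lt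
    _ = ENNReal.ofReal ((poissonMeasure lam).real {n : ℕ | (1 + ε) * lam ≤ n}) :=
        (ofReal_measureReal (measure_ne_top _ _)).symm
    _ < ENNReal.ofReal (exp (-lam * ε ^ 2 / 4)) := by
        rw [ENNReal.ofReal_lt_ofReal_iff (exp_pos _)]
        exact (poissonMeasure_real_ge_one_add_mul_le lam hε0.le).trans_lt hexp
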